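/- In a strong parapolar space of diameter 2, let p be a point and H a symplecton not containing p. Then the set of points of H collinear with p is a singular subspace of H. -/

import Mathlib

namespace ImbrexGeom

variable {P : Type*}

/-- Two points are collinear: equal or on a common line. -/
def Col (Ls : Set (Set P)) (x y : P) : Prop :=
  x = y ∨ ∃ L ∈ Ls, x ∈ L ∧ y ∈ L

/-- A line of the geometry induced on a subset `S`. -/
def LineIn (Ls : Set (Set P)) (S : Set P) (L : Set P) : Prop :=
  L ∈ Ls ∧ L ⊆ S

/-- Collinearity inside the geometry induced on `S`. -/
def ColIn (Ls : Set (Set P)) (S : Set P) (x y : P) : Prop :=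
  x = y ∨ ∃ L, LineIn Ls S L ∧ x ∈ L ∧ y ∈ L

/-- A subspace of the geometry induced on `S`. -/
def IsSubspaceIn (Ls : Set (Set P)) (S T : Set P) : Prop :=
  T ⊆ S ∧ ∀ L, LineIn Ls S L → ∀ x ∈ L, ∀ y ∈ L, x ≠ y → x ∈ T → y ∈ T → L ⊆ T

def IsSubspace (Ls : Set (Set P)) (T : Set P) : Prop :=
  IsSubspaceIn Ls Set.univ T

/-- A convex subspace (adapted to diameter 2): closed under taking common
neighbours of non-collinear pairs, i.e. all points on shortest paths. -/
def IsConvex (Ls : Set (Set P)) (S : Set P) : Prop :=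
  IsSubspace Ls S ∧ ∀ x ∈ S, ∀ y ∈ S, ¬ Col Ls x y →
    ∀ z, Col Ls x z → Col Ls z y → z ∈ S

/-- `S` is the smallest convex subspace containing `x` and `y`. -/
def SmallestConvex (Ls : Set (Set P)) (x y : P) (S : Set P) : Prop :=
  IsConvex Ls S ∧ x ∈ S ∧ y ∈ S ∧
    ∀ S', IsConvex Ls S' → x ∈ S' → y ∈ S' → S ⊆ S'

/-- A singular subspace of the geometry induced on `S`. -/
def IsSingularIn (Ls : Set (Set P)) (S T : Set P) : Prop :=
  IsSubspaceIn Ls S T ∧ ∀ x ∈ T, ∀ y ∈ T, ColIn Ls S x y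

def IsSingular (Ls : Set (Set P)) (T : Set P) : Prop :=
  IsSingularIn Ls Set.univ T

/-- A maximal singular subspace of the geometry induced on `S`. -/
def MaxSingularIn (Ls : Set (Set P)) (S T : Set P) : Prop :=
  IsSingularIn Ls S T ∧ ∀ T', IsSingularIn Ls S T' → T ⊆ T' → T' = T

/-- A block: a maximal singular subspace of the whole geometry. -/
def IsBlock (Ls : Set (Set P)) (B : Set P) : Prop :=
  MaxSingularIn Ls Set.univ B

/-- The geometry induced on `S` has polar rank `r`: every nested (strictly
increasing) sequence of singular subspaces has length at most `r + 1`, and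
one of length `r + 1` exists. -/
def HasPolarRank (Ls : Set (Set P)) (S : Set P) (r : ℕ) : Prop :=
  (∀ n : ℕ, ∀ f : Fin n → Set P, (∀ i, IsSingularIn Ls S (f i)) →
      (∀ i j, i < j → f i ⊂ f j) → n ≤ r + 1) ∧
  ∃ f : Fin (r + 1) → Set P, (∀ i, IsSingularIn Ls S (f i)) ∧
      ∀ i j : Fin (r + 1), i < j → f i ⊂ f j

/-- The geometry induced on `S` is a polar space of rank `r`
(Buekenhout–Shult axioms). -/
def IsPolarSpace (Ls : Set (Set P)) (S : Set P) (r : ℕ) : Prop :=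
  (∀ L, LineIn Ls S L → ∃ x ∈ L, ∃ y ∈ L, ∃ z ∈ L, x ≠ y ∧ x ≠ z ∧ y ≠ z) ∧
  (∀ x ∈ S, ∃ y ∈ S, ¬ ColIn Ls S x y) ∧
  HasPolarRank Ls S r ∧
  (∀ x ∈ S, ∀ L, LineIn Ls S L → x ∉ L →
      (∃! y, y ∈ L ∧ ColIn Ls S x y) ∨ ∀ y ∈ L, ColIn Ls S x y)

/-- A strong parapolar space of diameter 2. -/
structure StrongParapolar2 (Ls : Set (Set P)) : Prop where
  connected : ∀ x y : P, Relation.ReflTransGen (Col Ls) x y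
  pps1 : ∀ x : P, ∀ L ∈ Ls, x ∉ L →
      (∀ y ∈ L, ¬ Col Ls x y) ∨ (∃! y, y ∈ L ∧ Col Ls x y) ∨ ∀ y ∈ L, Col Ls x y
  pps1_none : ∃ x : P, ∃ L ∈ Ls, ∀ y ∈ L, ¬ Col Ls x y
  pps1_one : ∃ x : P, ∃ L ∈ Ls, x ∉ L ∧ ∃! y, y ∈ L ∧ Col Ls x y
  pps1_all : ∃ x : P, ∃ L ∈ Ls, x ∉ L ∧ ∀ y ∈ L, Col Ls x y
  pps2 : ∀ x y : P, ¬ Col Ls x y →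
      ∃ S, SmallestConvex Ls x y S ∧ ∃ r, 2 ≤ r ∧ IsPolarSpace Ls S r

/-- A symplecton: the smallest convex subspace of a non-collinear pair. -/
def IsSymp (Ls : Set (Set P)) (S : Set P) : Prop :=
  ∃ x y, ¬ Col Ls x y ∧ SmallestConvex Ls x y S

/-- (PPS4): every nested sequence of singular subspaces has finite length. -/
def PPS4 (Ls : Set (Set P)) : Prop :=
  ∀ f : ℕ → Set P, (∀ n, IsSingular Ls (f n)) → ¬ ∀ n, f n ⊂ f (n + 1)

/-- The imbrex axiom (Imb). -/
def Imb (Ls : Set (Set P)) : Prop :=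
  ∀ x : P, ∀ L ∈ Ls, (∀ y ∈ L, ¬ Col Ls x y) →
    ∀ y₁ ∈ L, ∀ y₂ ∈ L, y₁ ≠ y₂ →
      ∀ S₁ S₂, SmallestConvex Ls x y₁ S₁ → SmallestConvex Ls x y₂ S₂ →
        MaxSingularIn Ls S₁ (S₁ ∩ S₂) ∧ MaxSingularIn Ls S₂ (S₁ ∩ S₂)

/-- An imbrex geometry. -/
structure ImbrexGeometry (Ls : Set (Set P)) : Prop where
  spp : StrongParapolar2 Ls
  pps4 : PPS4 Ls
  imb : Imb Ls

/-- The geometry has symplectic rank `r`: all symplecta have polar rank `r`. -/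
def SympRank (Ls : Set (Set P)) (r : ℕ) : Prop :=
  ∀ S, IsSymp Ls S → HasPolarRank Ls S r

/-- All symplecta are thick generalized quadrangles: every point of a
symplecton lies on at least three lines of it (lines already have at least
three points by the polar space axioms). -/
def ThickSymps (Ls : Set (Set P)) : Prop :=
  ∀ S, IsSymp Ls S → ∀ x ∈ S, ∃ L₁ L₂ L₃, LineIn Ls S L₁ ∧ LineIn Ls S L₂ ∧
    LineIn Ls S L₃ ∧ L₁ ≠ L₂ ∧ L₁ ≠ L₃ ∧ L₂ ≠ L₃ ∧ x ∈ L₁ ∧ x ∈ L₂ ∧ x ∈ L₃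

/-- The perp of a set of lines in the geometry induced on `S`: all lines of
`S` concurrent with every member of the set. -/
def PerpSet (Ls : Set (Set P)) (S : Set P) (T : Set (Set P)) : Set (Set P) :=
  {N | LineIn Ls S N ∧ ∀ M ∈ T, (N ∩ M).Nonempty}

/-- A pair of lines is regular. -/
def RegularPair (Ls : Set (Set P)) (S : Set P) (L M : Set P) : Prop :=
  ∃ L' M', L' ∈ PerpSet Ls S {L, M} ∧ M' ∈ PerpSet Ls S {L, M} ∧ L' ≠ M' ∧
    PerpSet Ls S (PerpSet Ls S {L, M}) = PerpSet Ls S {L', M'}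

/-- `N` is a member of the spread of the symplecton `H` induced by the
block `B`: `N = B' ∩ H` for some block `B'` meeting `B`. -/
def InSpreadOf (Ls : Set (Set P)) (H B : Set P) (N : Set P) : Prop :=
  ∃ B', IsBlock Ls B' ∧ (B' ∩ B).Nonempty ∧ N = B' ∩ H

/-! By (PPS1), a line of `H` carrying two points collinear with `p` consists of points collinear
with `p`. Two points of `H` collinear with `p` are collinear with each other, since otherwise `p`
would be a common neighbour of a non-collinear pair of the convex subspace `H` and lie in `H`. -/

section

variable {Ls : Set (Set P)}

theorem Col.symm {x y : P} (h : Col Ls x y) : Col Ls y x := by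
  rcases h with rfl | ⟨L, hL, hx, hy⟩
  · exact Or.inl rfl
  · exact Or.inr ⟨L, hL, hy, hx⟩

theorem IsSymp.isConvex {S : Set P} (hS : IsSymp Ls S) : IsConvex Ls S := by
  obtain ⟨_, _, _, hconv, _⟩ := hS
  exact hconv

theorem IsSubspace.colIn_of_col {S : Set P} (hS : IsSubspace Ls S) {x y : P} (hx : x ∈ S)
    (hy : y ∈ S) (hxy : Col Ls x y) : ColIn Ls S x y := by
  rcases hxy with rfl | ⟨L, hL, hxL, hyL⟩
  · exact Or.inl rfl
  by_cases hne : x = y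
  · exact Or.inl hne
  exact Or.inr ⟨L, ⟨hL, hS.2 L ⟨hL, L.subset_univ⟩ x hxL y hyL hne hx hy⟩, hxL, hyL⟩

theorem IsConvex.col_of_col_of_notMem {S : Set P} (hS : IsConvex Ls S) {p x y : P} (hp : p ∉ S)
    (hx : x ∈ S) (hy : y ∈ S) (hpx : Col Ls p x) (hpy : Col Ls p y) : Col Ls x y :=
  of_not_not fun hxy => hp (hS.2 x hx y hy hxy p hpx.symm hpy)

theorem StrongParapolar2.col_of_two_col (hΓ : StrongParapolar2 Ls) {p : P} {L : Set P}
    (hL : L ∈ Ls) (hpL : p ∉ L) {x y : P} (hx : x ∈ L) (hy : y ∈ L) (hxy : x ≠ y)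
    (hpx : Col Ls p x) (hpy : Col Ls p y) : ∀ z ∈ L, Col Ls p z := by
  rcases hΓ.pps1 p L hL hpL with hnone | ⟨_, _, huniq⟩ | hall
  · exact absurd hpx (hnone x hx)
  · exact absurd ((huniq x ⟨hx, hpx⟩).trans (huniq y ⟨hy, hpy⟩).symm) hxy
  · exact hall

theorem StrongParapolar2.isSubspaceIn_setOf_col (hΓ : StrongParapolar2 Ls) {p : P} {H : Set P}
    (hp : p ∉ H) : IsSubspaceIn Ls H {x | x ∈ H ∧ Col Ls p x} := by
  refine ⟨fun x hx => hx.1, fun L hL x hx y hy hxy hxT hyT z hz => ⟨hL.2 hz, ?_⟩⟩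
  exact hΓ.col_of_two_col hL.1 (fun hpL => hp (hL.2 hpL)) hx hy hxy hxT.2 hyT.2 z hz

theorem StrongParapolar2.isSingularIn_setOf_col (hΓ : StrongParapolar2 Ls) {p : P} {H : Set P}
    (hH : IsConvex Ls H) (hp : p ∉ H) : IsSingularIn Ls H {x | x ∈ H ∧ Col Ls p x} :=
  ⟨hΓ.isSubspaceIn_setOf_col hp, fun _ hx _ hy =>
    hH.1.colIn_of_col hx.1 hy.1 (hH.col_of_col_of_notMem hp hx.1 hy.1 hx.2 hy.2)⟩

end

/-- The points of a symplecton `H` collinear with a point `p ∉ H` form a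
singular subspace of `H`. -/
theorem collinear_points_singular (Ls : Set (Set P)) (hΓ : StrongParapolar2 Ls)
    (p : P) (H : Set P) (hH : IsSymp Ls H) (hp : p ∉ H) :
    IsSingularIn Ls H {x | x ∈ H ∧ Col Ls p x} :=
  hΓ.isSingularIn_setOf_col hH.isConvex hp

end ImbrexGeom
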